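/- Let F be a bounded nonnegative real random variable on a probability space and a > 0. Assume that for every u < 0, Ent(exp(uF)) ≤ φ(−u)·a·E[F·exp(uF)]. Then for every λ < 0, log E[exp(λ(F − E F))] ≤ (a·φ(−λ)/(1 − a·φ(−λ)/λ))·E F. -/

import Mathlib

open MeasureTheory

/-- Entropy of a (nonnegative) random variable: `Ent(Z) = E[Z log Z] − E[Z] log E[Z]`. -/
noncomputable def Ent {Ω : Type*} [MeasurableSpace Ω] (P : Measure Ω) (Z : Ω → ℝ) : ℝ :=
  (∫ ω, Z ω * Real.log (Z ω) ∂P) - (∫ ω, Z ω ∂P) * Real.log (∫ ω, Z ω ∂P)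

/-- `φ(z) = e^z − z − 1`. -/
noncomputable def phiFn (z : ℝ) : ℝ := Real.exp z - z - 1

/-!
Write `H = cgf F` (so `H' = E[F e^{tF}] / E[e^{tF}]`) and `β(t) = t - a φ(-t)`. Since
`Ent(e^{tF}) = E[e^{tF}] (t H'(t) - H(t))`, the entropy hypothesis says `H'(t) β(t) ≤ H(t)` for
`t < 0`. Together with `H ≤ 0` on `(-∞, 0]` and `2 (e^s - 1) ≤ s (e^s + 1)` for `s ≥ 0`, this
makes `H(t) β(t) / t²` nonincreasing on `(-∞, 0)`; its limit at `0⁻` is `H'(0) β'(0) = E F`. Hence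
`E F · λ² ≤ H(λ) β(λ)`, which rearranges to the bound because `β(λ) < 0`.
-/

open ProbabilityTheory Real Filter Topology Set

theorem two_mul_exp_sub_one_le_mul_exp_add_one {s : ℝ} (hs : 0 ≤ s) :
    2 * (exp s - 1) ≤ s * (exp s + 1) := by
  have hderiv : ∀ x, HasDerivAt (fun x => x * (exp x + 1) - 2 * (exp x - 1))
      (1 - exp x * (1 - x)) x := fun x =>
    (((hasDerivAt_id x).mul ((hasDerivAt_exp x).add_const 1)).sub
      (((hasDerivAt_exp x).sub_const 1).const_mul 2)).congr_deriv (by simp only [id]; ring)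
  have hmono := monotone_of_hasDerivAt_nonneg hderiv fun x => show (0 : ℝ) ≤ _ by
    have h : exp x * (1 - x) ≤ exp x * exp (-x) :=
      mul_le_mul_of_nonneg_left (by linarith [add_one_le_exp (-x)]) (exp_pos x).le
    rw [← exp_add, add_neg_cancel, exp_zero] at h
    linarith
  simpa using hmono hs

theorem phiFn_nonneg (z : ℝ) : 0 ≤ phiFn z := by
  linarith [add_one_le_exp z, show phiFn z = exp z - z - 1 from rfl]

theorem hasDerivAt_sub_mul_phiFn_neg (a t : ℝ) :
    HasDerivAt (fun t => t - a * phiFn (-t)) (1 - a * (1 - exp (-t))) t := by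
  have hexp : HasDerivAt (fun t => exp (-t)) (-exp (-t)) t := by
    simpa using (hasDerivAt_neg t).exp
  exact ((hasDerivAt_id t).sub
    (((hexp.sub (hasDerivAt_neg t)).sub_const 1).const_mul a)).congr_deriv (by ring)

theorem tendsto_mul_div_sq_of_hasDerivAt {f g : ℝ → ℝ} {c d : ℝ} (hf : HasDerivAt f c 0)
    (hg : HasDerivAt g d 0) (hf0 : f 0 = 0) (hg0 : g 0 = 0) :
    Tendsto (fun t => f t * g t / t ^ 2) (𝓝[≠] 0) (𝓝 (c * d)) := by
  refine ((hasDerivAt_iff_tendsto_slope.mp hf).mul (hasDerivAt_iff_tendsto_slope.mp hg)).congr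
    fun t => ?_
  simp only [slope_def_field, hf0, hg0, sub_zero]
  ring

section Herbst

variable {H H' : ℝ → ℝ} {a : ℝ}

theorem antitoneOn_mul_sub_mul_phiFn_div_sq (ha : 0 ≤ a)
    (hH : ∀ t < 0, HasDerivAt H (H' t) t) (hH_nonpos : ∀ t < 0, H t ≤ 0)
    (hineq : ∀ t < 0, H' t * (t - a * phiFn (-t)) ≤ H t) :
    AntitoneOn (fun t => H t * (t - a * phiFn (-t)) / t ^ 2) (Iio 0) := by
  set β : ℝ → ℝ := fun t => t - a * phiFn (-t)
  set β' : ℝ → ℝ := fun t => 1 - a * (1 - exp (-t))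
  set w' : ℝ → ℝ := fun t =>
    ((H' t * β t + H t * β' t) * t ^ 2 - H t * β t * (2 * t)) / (t ^ 2) ^ 2
  have hderiv : ∀ t < 0, HasDerivAt (fun t => H t * β t / t ^ 2) (w' t) t :=
    fun t ht => (((hH t ht).mul (hasDerivAt_sub_mul_phiFn_neg a t)).div (hasDerivAt_pow 2 t)
      (pow_ne_zero 2 ht.ne)).congr_deriv (by simp [w', β, β'])
  show AntitoneOn (fun t => H t * β t / t ^ 2) (Iio 0)
  refine antitoneOn_of_hasDerivWithinAt_nonpos (f' := w') (convex_Iio 0)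
    (fun t ht => (hderiv t ht).continuousAt.continuousWithinAt) (fun t ht => ?_) fun t ht => ?_
  · rw [interior_Iio] at ht ⊢
    exact (hderiv t ht).hasDerivWithinAt
  rw [interior_Iio] at ht
  refine div_nonpos_of_nonpos_of_nonneg ?_ (by positivity)
  have htH : 0 ≤ t * H t := mul_nonneg_of_nonpos_of_nonpos ht.le (hH_nonpos t ht)
  have hexp := two_mul_exp_sub_one_le_mul_exp_add_one (neg_nonneg.mpr ht.le)
  calc (H' t * β t + H t * β' t) * t ^ 2 - H t * β t * (2 * t)
      ≤ (H t + H t * β' t) * t ^ 2 - H t * β t * (2 * t) := by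
        gcongr; exact hineq t ht
    _ = t * H t * a * (2 * (exp (-t) - 1) - -t * (exp (-t) + 1)) := by
        simp only [β, β', phiFn]; ring
    _ ≤ 0 := mul_nonpos_of_nonneg_of_nonpos (by positivity) (by linarith)

theorem sub_mul_le_of_deriv_mul_sub_mul_phiFn_le (ha : 0 ≤ a)
    (hH : ∀ t ≤ 0, HasDerivAt H (H' t) t) (hH0 : H 0 = 0) (hH_nonpos : ∀ t < 0, H t ≤ 0)
    (hineq : ∀ t < 0, H' t * (t - a * phiFn (-t)) ≤ H t) {lam : ℝ} (hlam : lam < 0) :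
    H lam - lam * H' 0 ≤ a * phiFn (-lam) / (1 - a * phiFn (-lam) / lam) * H' 0 := by
  have hlim := (tendsto_mul_div_sq_of_hasDerivAt (hH 0 le_rfl)
    (hasDerivAt_sub_mul_phiFn_neg a 0) hH0 (by simp [phiFn])).mono_left
    (nhdsLT_le_nhdsNE 0)
  have hle : H' 0 ≤ H lam * (lam - a * phiFn (-lam)) / lam ^ 2 := by
    refine le_of_tendsto (by simpa using hlim) ?_
    filter_upwards [Ioo_mem_nhdsLT hlam] with t ht
    exact antitoneOn_mul_sub_mul_phiFn_div_sq ha (fun t ht => hH t ht.le) hH_nonpos hineq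
      hlam ht.2 ht.1.le
  have hβ : lam - a * phiFn (-lam) < 0 := by nlinarith [phiFn_nonneg (-lam)]
  rw [le_div_iff₀ (sq_pos_of_neg hlam)] at hle
  rw [← div_self hlam.ne, ← sub_div, div_div_eq_mul_div, div_mul_eq_mul_div,
    le_div_iff_of_neg hβ]
  nlinarith

end Herbst

section Entropy

variable {Ω : Type*} [MeasurableSpace Ω] {P : Measure Ω} {X : Ω → ℝ}

theorem ent_exp_mul_eq (u : ℝ) :
    Ent P (fun ω => exp (u * X ω)) =
      u * P[fun ω => X ω * exp (u * X ω)] - mgf X P u * cgf X P u := by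
  simp only [Ent, log_exp, cgf, mgf]
  rw [← integral_const_mul]
  congr 2 with ω
  ring

theorem cgf_nonpos [IsProbabilityMeasure P] (hX : 0 ≤ᵐ[P] X) {t : ℝ} (ht : t ≤ 0) :
    cgf X P t ≤ 0 := by
  refine log_nonpos mgf_nonneg ?_
  simpa using mgf_anti_of_nonpos (X := 0) hX ht (by simp)

theorem hasDerivAt_cgf [NeZero P] {t : ℝ} (ht : t ∈ interior (integrableExpSet X P)) :
    HasDerivAt (cgf X P) (P[fun ω => X ω * exp (t * X ω)] / mgf X P t) t :=
  (hasDerivAt_mgf ht).log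
    (mgf_pos' (NeZero.ne P) (integrable_of_mem_integrableExpSet (interior_subset ht))).ne'

theorem deriv_mul_sub_mul_phiFn_le_cgf [NeZero P] {a u : ℝ}
    (hu : Integrable (fun ω => exp (u * X ω)) P)
    (hEnt : Ent P (fun ω => exp (u * X ω)) ≤
      phiFn (-u) * a * P[fun ω => X ω * exp (u * X ω)]) :
    P[fun ω => X ω * exp (u * X ω)] / mgf X P u * (u - a * phiFn (-u)) ≤ cgf X P u := by
  rw [ent_exp_mul_eq] at hEnt
  rw [div_mul_eq_mul_div, div_le_iff₀ (mgf_pos' (NeZero.ne P) hu)]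
  linarith

theorem cgf_sub_const [NeZero P] {t : ℝ} (hX : Integrable (fun ω => exp (t * X ω)) P)
    (c : ℝ) :
    cgf (fun ω => X ω - c) P t = cgf X P t - t * c := by
  simp only [sub_eq_add_neg, cgf, mgf_add_const]
  rw [log_mul (mgf_pos' (NeZero.ne P) hX).ne' (exp_pos _).ne', log_exp]
  ring

theorem cgf_eq_zero_of_not_aemeasurable {t : ℝ} (ht : t ≠ 0) (hX : ¬AEMeasurable X P) :
    cgf X P t = 0 :=
  cgf_undef fun h => hX (aemeasurable_of_aemeasurable_exp_mul ht h.aemeasurable)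

end Entropy

/-- The bounded case of Theorem 3.11: if `F` is bounded and nonnegative, `a > 0` and
`Ent(e^{uF}) ≤ φ(−u)·a·E[F e^{uF}]` for all `u < 0`, then for every `λ < 0`,
`log E[e^{λ(F − EF)}] ≤ (a·φ(−λ)/(1 − a·φ(−λ)/λ))·EF`. -/
theorem lower_tail_mgf_bound {Ω : Type*} [MeasurableSpace Ω]
    (P : Measure Ω) [IsProbabilityMeasure P]
    (F : Ω → ℝ) (hF0 : ∀ ω, 0 ≤ F ω) (hFbdd : ∃ M : ℝ, ∀ ω, F ω ≤ M)
    (a : ℝ) (ha : 0 < a)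
    (hEnt : ∀ u : ℝ, u < 0 →
      Ent P (fun ω => Real.exp (u * F ω)) ≤
        phiFn (-u) * a * ∫ ω, F ω * Real.exp (u * F ω) ∂P) :
    ∀ lam : ℝ, lam < 0 →
      Real.log (∫ ω, Real.exp (lam * (F ω - ∫ ω', F ω' ∂P)) ∂P) ≤
        a * phiFn (-lam) / (1 - a * phiFn (-lam) / lam) * ∫ ω', F ω' ∂P := by
  intro lam hlam
  change cgf (fun ω => F ω - ∫ ω', F ω' ∂P) P lam ≤ _
  by_cases hF : AEMeasurable F P
  swap
  · rw [cgf_eq_zero_of_not_aemeasurable hlam.ne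
      fun h => hF (by simpa using h.add_const (∫ ω, F ω ∂P)),
      integral_undef fun h => hF h.aemeasurable, mul_zero]
  obtain ⟨M, hM⟩ := hFbdd
  have hint : ∀ t, Integrable (fun ω => exp (t * F ω)) P := fun t =>
    integrable_exp_mul_of_mem_Icc hF (ae_of_all _ fun ω => ⟨hF0 ω, hM ω⟩)
  have hexpSet : integrableExpSet F P = univ := eq_univ_of_forall hint
  have hmean : P[fun ω => F ω * exp (0 * F ω)] / mgf F P 0 = ∫ ω, F ω ∂P := by simp
  have key := sub_mul_le_of_deriv_mul_sub_mul_phiFn_le ha.le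
    (fun t _ => hasDerivAt_cgf (by simp [hexpSet])) cgf_zero
    (fun t ht => cgf_nonpos (ae_of_all _ hF0) ht.le)
    (fun t ht => deriv_mul_sub_mul_phiFn_le_cgf (hint t) (hEnt t ht)) hlam
  rw [hmean] at key
  rwa [cgf_sub_const (hint lam)]
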